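/- Let γ > 0, let R ≥ 600·(γ^{3/4} + γ^{−3/4}), and let j ≥ 1 be an integer. Then the equation w = G_{j,R}(w) has exactly one solution in F_∞, and this solution lies in F_j. Moreover, for distinct integers j, j′ ≥ 1, the corresponding solutions are distinct. -/

import Mathlib

/-- The argument in `[-π, π)`: it agrees with the principal argument `Complex.arg`
except on the negative real axis, where it takes the value `-π`. -/
noncomputable def argm (ζ : ℂ) : ℝ :=
  if Complex.arg ζ = Real.pi then -Real.pi else Complex.arg ζ

/-- The branch `sq₋` of the square root with branch cut along the negative real axis:
`sq₋(ζ) = √|ζ|·exp(i·arg₋(ζ)/2)`. -/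
noncomputable def sqm (ζ : ℂ) : ℂ :=
  (Real.sqrt ‖ζ‖ : ℂ) * Complex.exp (Complex.I * (argm ζ) / 2)

/-- The closed sector `F_∞ = {w : Re w ≤ 0 ≤ Im w, |Re w| ≥ 2·Im w}`. -/
def Finf : Set ℂ := {w : ℂ | w.re ≤ 0 ∧ 0 ≤ w.im ∧ 2 * w.im ≤ |w.re|}

/-- `h(w) = (sq₋(w² + iγ) − w)/(sq₋(w² + iγ) + w)`. -/
noncomputable def hfun (γ : ℝ) (w : ℂ) : ℂ :=
  (sqm (w ^ 2 + Complex.I * γ) - w) / (sqm (w ^ 2 + Complex.I * γ) + w)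

/-- `A(w) = log|h(w)|`. -/
noncomputable def Afun (γ : ℝ) (w : ℂ) : ℝ := Real.log ‖hfun γ w‖

/-- `B_j(w) = arg₋(h(w)) + 2πj`. -/
noncomputable def Bfun (γ : ℝ) (j : ℤ) (w : ℂ) : ℝ := argm (hfun γ w) + 2 * Real.pi * j

/-- `G_{j,R}(w) = (−B_j(w) + i·A(w))/(2R)`. -/
noncomputable def Gfun (γ : ℝ) (j : ℤ) (R : ℝ) (w : ℂ) : ℂ :=
  (-(Bfun γ j w : ℂ) + Complex.I * (Afun γ w : ℂ)) / (2 * (R : ℂ))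

/-- `F_j = {w ∈ F_∞ : B_j(w) ≥ 2·|A(w)|}`. -/
noncomputable def Fj (γ : ℝ) (j : ℤ) : Set ℂ :=
  {w ∈ Finf | 2 * |Afun γ w| ≤ Bfun γ j w}

/-!
On `F_∞` the radicand `ζ = w² + iγ` has `Re ζ ≥ 0`, so `s = sq₋(ζ)` is the principal root
and `|Im s| ≤ Re s`. Then `(s - w)(s + w) = iγ` gives `h = (s - w)² / (iγ)`, and the position
of `s - w` in the sector `-π/4 < arg ≤ π/4` puts `h` in `-π < arg ≤ 0`, while `|s + w| ≤ |s - w|`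
gives `|h| ≥ 1`. Hence on `F_∞` we have `G_{j,R} = (i log h - 2πj) / (2R)`, holomorphic with
`G' = -i / (R s)`; as `|s| ≥ √γ / 2`, it is a `1/2`-contraction of the convex set `F_∞` once
`R √γ ≥ 4`. The bounds `A(w) ≤ 4|w| / √γ` and `πj ≤ B_j ≤ 2πj` show that it maps
`F_∞ ∩ {|w| ≤ 2πj / R}` into itself when `R √γ ≥ 16`, and Banach's theorem gives the solution.
For a solution, `w ∈ F_∞` reads `2A ≤ B_j`, i.e. `w ∈ F_j`, and `Re w = -B_j(w) / (2R)`
determines `j`.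
-/

open Complex Set Metric Topology
open scoped Real

lemma LipschitzOnWith.eq_of_isFixedPt {α : Type*} [MetricSpace α] {K : NNReal} {f : α → α}
    {s : Set α} (hf : LipschitzOnWith K f s) (hK : K < 1) {x y : α} (hx : x ∈ s) (hy : y ∈ s)
    (hfx : Function.IsFixedPt f x) (hfy : Function.IsFixedPt f y) : x = y := by
  have h := hf.dist_le_mul x hx y hy
  rw [hfx.eq, hfy.eq] at h
  have hK' : (K : ℝ) < 1 := hK
  exact dist_le_zero.1 (by nlinarith [dist_nonneg (x := x) (y := y)])

lemma le_mul_sqrt_of_mul_rpow_add_rpow_le {γ R c : ℝ} (hγ : 0 < γ) (hc : 0 ≤ c)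
    (hR : c * (γ ^ ((3 : ℝ) / 4) + γ ^ (-(3 : ℝ) / 4)) ≤ R) : c ≤ R * √γ := by
  have hkey : (γ ^ ((3 : ℝ) / 4) + γ ^ (-(3 : ℝ) / 4)) * √γ =
      γ ^ ((5 : ℝ) / 4) + γ ^ (-(1 : ℝ) / 4) := by
    rw [Real.sqrt_eq_rpow, add_mul, ← Real.rpow_add hγ, ← Real.rpow_add hγ]
    norm_num
  have hone : 1 ≤ γ ^ ((5 : ℝ) / 4) + γ ^ (-(1 : ℝ) / 4) := by
    have h₅ := Real.rpow_pos_of_pos hγ ((5 : ℝ) / 4)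
    have h₁ := Real.rpow_pos_of_pos hγ (-(1 : ℝ) / 4)
    rcases le_or_gt 1 γ with h | h
    · linarith [Real.one_le_rpow h (by norm_num : (0 : ℝ) ≤ 5 / 4)]
    · linarith [Real.one_le_rpow_of_pos_of_le_one_of_nonpos hγ h.le
        (by norm_num : -(1 : ℝ) / 4 ≤ 0)]
  calc c ≤ c * ((γ ^ ((3 : ℝ) / 4) + γ ^ (-(3 : ℝ) / 4)) * √γ) := by
        rw [hkey]; exact le_mul_of_one_le_right hc hone
    _ ≤ R * √γ := by rw [← mul_assoc]; gcongr

lemma arg_nonpos_of_im_nonpos {z : ℂ} (hz : z ∈ slitPlane) (him : z.im ≤ 0) : arg z ≤ 0 := by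
  rcases him.lt_or_eq with h | h
  · exact (arg_neg_iff.2 h).le
  · exact (arg_eq_zero_iff.2 ⟨((mem_slitPlane_iff.1 hz).resolve_right (not_not.2 h)).le, h⟩).le

lemma re_sq_div_I_mul (u : ℂ) (γ : ℝ) : (u ^ 2 / (I * γ)).re = 2 * u.re * u.im / γ := by
  rw [div_mul_eq_div_div, div_ofReal_re, div_I]
  simp [sq]; ring

lemma im_sq_div_I_mul (u : ℂ) (γ : ℝ) : (u ^ 2 / (I * γ)).im = (u.im ^ 2 - u.re ^ 2) / γ := by
  rw [div_mul_eq_div_div, div_ofReal_im, div_I]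
  simp [sq]

section QuarterSector

variable {u : ℂ} {γ : ℝ}

lemma im_sq_div_I_mul_nonpos (hγ : 0 ≤ γ) (hu : |u.im| ≤ u.re) : (u ^ 2 / (I * γ)).im ≤ 0 := by
  rw [im_sq_div_I_mul]
  exact div_nonpos_of_nonpos_of_nonneg (by nlinarith [abs_le.1 hu]) hγ

-- `u` lies in the sector `-π/4 < arg u ≤ π/4`, so `u² / (iγ)` lies in `-π < arg ≤ 0`.
lemma sq_div_I_mul_mem_slitPlane (hγ : 0 < γ) (hu : |u.im| ≤ u.re) (hu' : 0 < u.re + u.im) :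
    u ^ 2 / (I * γ) ∈ slitPlane := by
  rw [mem_slitPlane_iff, re_sq_div_I_mul, im_sq_div_I_mul]
  by_contra! h
  have hsq : u.im ^ 2 = u.re ^ 2 := by
    linarith [(div_eq_zero_iff.1 h.2).resolve_right hγ.ne']
  have hre : 2 * u.re * u.im ≤ 0 := by simpa using (div_le_iff₀ hγ).1 h.1
  have him : u.im = u.re := by nlinarith [abs_le.1 hu]
  nlinarith

end QuarterSector

lemma argm_eq_arg {z : ℂ} (h : arg z ≠ π) : argm z = arg z := if_neg h

lemma argm_mem_Ico (z : ℂ) : argm z ∈ Ico (-π) π := by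
  unfold argm
  split_ifs with h
  · exact ⟨le_rfl, by linarith [Real.pi_pos]⟩
  · exact ⟨(neg_pi_lt_arg z).le, (arg_le_pi z).lt_of_ne h⟩

lemma exp_I_mul_argm (z : ℂ) : exp (I * argm z) = exp (arg z * I) := by
  unfold argm
  split_ifs with h
  · rw [h]; push_cast; rw [exp_pi_mul_I, ← exp_neg_pi_mul_I]; ring_nf
  · rw [mul_comm]

lemma sqm_sq (z : ℂ) : sqm z ^ 2 = z := by
  rw [sqm, mul_pow, ← ofReal_pow, Real.sq_sqrt (norm_nonneg z), ← exp_nat_mul,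
    show ((2 : ℕ) : ℂ) * (I * argm z / 2) = I * argm z by push_cast; ring, exp_I_mul_argm,
    norm_mul_exp_arg_mul_I]

lemma norm_sqm (z : ℂ) : ‖sqm z‖ = √‖z‖ := by
  rw [sqm, norm_mul, show I * (argm z : ℂ) / 2 = (argm z / 2 : ℝ) * I by push_cast; ring,
    norm_exp_ofReal_mul_I, mul_one, norm_real, Real.norm_of_nonneg (Real.sqrt_nonneg _)]

lemma re_sqm_nonneg (z : ℂ) : 0 ≤ (sqm z).re := by
  rw [sqm, show I * (argm z : ℂ) / 2 = (argm z / 2 : ℝ) * I by push_cast; ring,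
    re_ofReal_mul, exp_ofReal_mul_I_re]
  obtain ⟨h₁, h₂⟩ := argm_mem_Ico z
  exact mul_nonneg (Real.sqrt_nonneg _) (Real.cos_nonneg_of_mem_Icc ⟨by linarith, by linarith⟩)

lemma re_sq_sub_im_sq_sqm (z : ℂ) : (sqm z).re ^ 2 - (sqm z).im ^ 2 = z.re := by
  conv_rhs => rw [← sqm_sq z]
  simp [sq]

lemma two_mul_re_mul_im_sqm (z : ℂ) : 2 * (sqm z).re * (sqm z).im = z.im := by
  conv_rhs => rw [← sqm_sq z]
  simp [sq]; ring

lemma abs_im_sqm_le_re {z : ℂ} (hz : 0 ≤ z.re) : |(sqm z).im| ≤ (sqm z).re :=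
  abs_le_of_sq_le_sq (by linarith [re_sq_sub_im_sq_sqm z]) (re_sqm_nonneg z)

lemma sqm_ne_zero {z : ℂ} (hz : z ≠ 0) : sqm z ≠ 0 := fun h =>
  hz (by rw [← sqm_sq z, h, zero_pow two_ne_zero])

lemma sqm_eq_exp_log {z : ℂ} (hz : z ∈ slitPlane) : sqm z = exp (log z / 2) := by
  rw [sqm, argm_eq_arg (slitPlane_arg_ne_pi hz), log, add_div, exp_add,
    show (Real.log ‖z‖ : ℂ) / 2 = (Real.log ‖z‖ / 2 : ℝ) by push_cast; ring, ← ofReal_exp,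
    Real.sqrt_eq_rpow, Real.rpow_def_of_pos (norm_pos_iff.mpr (slitPlane_ne_zero hz))]
  ring_nf

lemma hasDerivAt_sqm {z : ℂ} (hz : z ∈ slitPlane) : HasDerivAt sqm (1 / (2 * sqm z)) z := by
  have heq : (fun z => exp (log z / 2)) =ᶠ[𝓝 z] sqm :=
    Filter.eventually_of_mem (isOpen_slitPlane.mem_nhds hz) fun x hx => (sqm_eq_exp_log hx).symm
  refine (((hasDerivAt_log hz).div_const 2).cexp.congr_of_eventuallyEq heq.symm).congr_deriv ?_
  have hs := sqm_ne_zero (slitPlane_ne_zero hz)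
  have hz' : z⁻¹ = (sqm z ^ 2)⁻¹ := by rw [sqm_sq]
  rw [← sqm_eq_exp_log hz, hz']
  field_simp

lemma convex_Finf : Convex ℝ Finf := by
  intro x ⟨hx₁, hx₂, hx₃⟩ y ⟨hy₁, hy₂, hy₃⟩ a b ha hb _
  rw [abs_of_nonpos hx₁] at hx₃
  rw [abs_of_nonpos hy₁] at hy₃
  have hre : (a • x + b • y).re = a * x.re + b * y.re := by simp
  have him : (a • x + b • y).im = a * x.im + b * y.im := by simp
  refine ⟨?_, ?_, ?_⟩
  · rw [hre]; nlinarith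
  · rw [him]; positivity
  · rw [hre, him, abs_of_nonpos (by nlinarith)]; nlinarith

lemma isClosed_Finf : IsClosed Finf :=
  (isClosed_le continuous_re continuous_const).inter <|
    (isClosed_le continuous_const continuous_im).inter <|
      isClosed_le (continuous_const.mul continuous_im) continuous_re.abs

lemma zero_mem_Finf : (0 : ℂ) ∈ Finf := by simp [Finf]

lemma re_sq_add_I_mul (γ : ℝ) (w : ℂ) : (w ^ 2 + I * γ).re = w.re ^ 2 - w.im ^ 2 := by
  simp [sq]

lemma im_sq_add_I_mul (γ : ℝ) (w : ℂ) : (w ^ 2 + I * γ).im = 2 * w.re * w.im + γ := by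
  simp [sq]; ring

section Sector

variable {γ : ℝ} {w : ℂ}

lemma two_mul_im_le_neg_re (hw : w ∈ Finf) : 2 * w.im ≤ -w.re := by
  simpa [abs_of_nonpos hw.1] using hw.2.2

lemma re_sq_add_I_mul_nonneg (hw : w ∈ Finf) : 0 ≤ (w ^ 2 + I * γ).re := by
  rw [re_sq_add_I_mul]
  nlinarith [hw.2.1, two_mul_im_le_neg_re hw]

lemma sq_add_I_mul_mem_slitPlane (hγ : γ ≠ 0) (hw : w ∈ Finf) : w ^ 2 + I * γ ∈ slitPlane := by
  rw [mem_slitPlane_iff, re_sq_add_I_mul, im_sq_add_I_mul]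
  by_contra! h
  have h₁ := hw.2.1
  have h₂ := two_mul_im_le_neg_re hw
  have him : w.im = 0 := by nlinarith
  have hre : w.re = 0 := by nlinarith
  simp [him, hre, hγ] at h

-- Either `Im(w² + iγ) ≥ γ/2`, or `|Re w|·Im w > γ/4` forces `Re(w² + iγ) ≥ 3(Re w)²/4 > γ/4`.
lemma div_four_le_norm_sq_add_I_mul (hγ : 0 < γ) (hw : w ∈ Finf) : γ / 4 ≤ ‖w ^ 2 + I * γ‖ := by
  have hre := re_le_norm (w ^ 2 + I * γ)
  have him := abs_im_le_norm (w ^ 2 + I * γ)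
  rw [re_sq_add_I_mul] at hre
  rw [im_sq_add_I_mul] at him
  have h₁ := hw.2.1
  have h₂ := two_mul_im_le_neg_re hw
  by_cases hc : -(2 * w.re * w.im) ≤ γ / 2
  · linarith [le_abs_self (2 * w.re * w.im + γ)]
  · nlinarith

lemma sqrt_div_two_le_norm_sqm (hγ : 0 < γ) (hw : w ∈ Finf) :
    √γ / 2 ≤ ‖sqm (w ^ 2 + I * γ)‖ := by
  rw [norm_sqm, Real.le_sqrt' (by positivity), div_pow, Real.sq_sqrt hγ.le]
  linarith [div_four_le_norm_sq_add_I_mul hγ hw]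

lemma norm_sqm_le (hγ : 0 ≤ γ) (w : ℂ) : ‖sqm (w ^ 2 + I * γ)‖ ≤ ‖w‖ + √γ := by
  have hnorm : ‖w ^ 2 + I * γ‖ ≤ ‖w‖ ^ 2 + γ :=
    (norm_add_le _ _).trans_eq (by simp [abs_of_nonneg hγ])
  rw [norm_sqm, Real.sqrt_le_left (by positivity)]
  nlinarith [Real.sq_sqrt hγ, Real.sqrt_nonneg γ, norm_nonneg w]

end Sector

section Branch

variable {γ : ℝ} {w : ℂ}

lemma sqm_sub_mul_sqm_add (γ : ℝ) (w : ℂ) :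
    (sqm (w ^ 2 + I * γ) - w) * (sqm (w ^ 2 + I * γ) + w) = I * γ := by
  linear_combination sqm_sq (w ^ 2 + I * γ)

lemma I_mul_ofReal_ne_zero (hγ : γ ≠ 0) : I * (γ : ℂ) ≠ 0 := by simp [hγ]

lemma sqm_sub_ne_zero (hγ : γ ≠ 0) (w : ℂ) : sqm (w ^ 2 + I * γ) - w ≠ 0 := fun h =>
  I_mul_ofReal_ne_zero hγ (by rw [← sqm_sub_mul_sqm_add, h, zero_mul])

lemma sqm_add_ne_zero (hγ : γ ≠ 0) (w : ℂ) : sqm (w ^ 2 + I * γ) + w ≠ 0 := fun h =>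
  I_mul_ofReal_ne_zero hγ (by rw [← sqm_sub_mul_sqm_add, h, mul_zero])

lemma hfun_eq_sq_div (hγ : γ ≠ 0) (w : ℂ) :
    hfun γ w = (sqm (w ^ 2 + I * γ) - w) ^ 2 / (I * γ) := by
  rw [hfun, div_eq_div_iff (sqm_add_ne_zero hγ w) (I_mul_ofReal_ne_zero hγ)]
  linear_combination (w - sqm (w ^ 2 + I * γ)) * sqm_sub_mul_sqm_add γ w

lemma abs_im_sqm_sub_le_re (hw : w ∈ Finf) :
    |(sqm (w ^ 2 + I * γ) - w).im| ≤ (sqm (w ^ 2 + I * γ) - w).re := by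
  have hs := abs_le.1 (abs_im_sqm_le_re (re_sq_add_I_mul_nonneg (γ := γ) hw))
  have h₁ := hw.2.1
  have h₂ := two_mul_im_le_neg_re hw
  rw [sub_re, sub_im, abs_le]
  constructor <;> linarith

lemma re_add_im_sqm_sub_pos (hγ : 0 < γ) (hw : w ∈ Finf) :
    0 < (sqm (w ^ 2 + I * γ) - w).re + (sqm (w ^ 2 + I * γ) - w).im := by
  set s := sqm (w ^ 2 + I * γ)
  have hs := abs_le.1 (abs_im_sqm_le_re (re_sq_add_I_mul_nonneg (γ := γ) hw))
  have h₁ := hw.2.1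
  have h₂ := two_mul_im_le_neg_re hw
  have hsq : 2 * s.re * s.im = 2 * w.re * w.im + γ := by
    rw [two_mul_re_mul_im_sqm, im_sq_add_I_mul]
  rw [sub_re, sub_im]
  by_contra! h
  have hw₀ : w.im = 0 ∧ w.re = 0 := ⟨by linarith, by linarith⟩
  rw [hw₀.1, hw₀.2] at hsq
  nlinarith

lemma hfun_mem_slitPlane (hγ : 0 < γ) (hw : w ∈ Finf) : hfun γ w ∈ slitPlane := by
  rw [hfun_eq_sq_div hγ.ne']
  exact sq_div_I_mul_mem_slitPlane hγ (abs_im_sqm_sub_le_re hw) (re_add_im_sqm_sub_pos hγ hw)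

lemma arg_hfun_nonpos (hγ : 0 < γ) (hw : w ∈ Finf) : arg (hfun γ w) ≤ 0 := by
  refine arg_nonpos_of_im_nonpos (hfun_mem_slitPlane hγ hw) ?_
  rw [hfun_eq_sq_div hγ.ne']
  exact im_sq_div_I_mul_nonpos hγ.le (abs_im_sqm_sub_le_re hw)

lemma argm_hfun (hγ : 0 < γ) (hw : w ∈ Finf) : argm (hfun γ w) = arg (hfun γ w) :=
  argm_eq_arg (slitPlane_arg_ne_pi (hfun_mem_slitPlane hγ hw))

lemma norm_sqm_add_le_norm_sqm_sub (hw : w ∈ Finf) :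
    ‖sqm (w ^ 2 + I * γ) + w‖ ≤ ‖sqm (w ^ 2 + I * γ) - w‖ := by
  set s := sqm (w ^ 2 + I * γ)
  have hs := abs_le.1 (abs_im_sqm_le_re (re_sq_add_I_mul_nonneg (γ := γ) hw))
  have h₁ := hw.2.1
  have h₂ := two_mul_im_le_neg_re hw
  rw [norm_def, norm_def]
  refine Real.sqrt_le_sqrt ?_
  simp only [normSq_apply, add_re, add_im, sub_re, sub_im]
  nlinarith [mul_nonneg (by linarith : 0 ≤ s.re - s.im) h₁,
    mul_nonneg (re_sqm_nonneg (w ^ 2 + I * γ)) (by linarith : 0 ≤ -w.re - w.im)]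

lemma Afun_nonneg (hγ : 0 < γ) (hw : w ∈ Finf) : 0 ≤ Afun γ w := by
  refine Real.log_nonneg ?_
  rw [hfun, norm_div]
  exact (one_le_div (norm_pos_iff.2 (sqm_add_ne_zero hγ.ne' w))).2 (norm_sqm_add_le_norm_sqm_sub hw)

lemma Afun_le (hγ : 0 < γ) (w : ℂ) : Afun γ w ≤ 4 * ‖w‖ / √γ := by
  set u := sqm (w ^ 2 + I * γ) - w
  have hsγ : 0 < √γ := Real.sqrt_pos.2 hγ
  have hnorm : ‖hfun γ w‖ = (‖u‖ / √γ) ^ 2 := by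
    rw [hfun_eq_sq_div hγ.ne', norm_div, norm_pow, div_pow, Real.sq_sqrt hγ.le]
    simp [u, abs_of_pos hγ]
  have hu : ‖u‖ ≤ 2 * ‖w‖ + √γ := (norm_sub_le _ _).trans (by linarith [norm_sqm_le hγ.le w])
  have hpos : 0 < ‖u‖ / √γ := div_pos (norm_pos_iff.2 (sqm_sub_ne_zero hγ.ne' w)) hsγ
  calc Afun γ w = 2 * Real.log (‖u‖ / √γ) := by rw [Afun, hnorm, Real.log_pow]; push_cast; ring
    _ ≤ 2 * (‖u‖ / √γ - 1) := by gcongr; exact Real.log_le_sub_one_of_pos hpos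
    _ ≤ 4 * ‖w‖ / √γ := by
      rw [div_sub_one hsγ.ne', mul_div_assoc']
      exact div_le_div_of_nonneg_right (by linarith) hsγ.le

lemma sub_pi_le_Bfun (γ : ℝ) (j : ℤ) (w : ℂ) : 2 * π * j - π ≤ Bfun γ j w := by
  rw [Bfun]
  linarith [(argm_mem_Ico (hfun γ w)).1]

lemma Bfun_le (hγ : 0 < γ) (hw : w ∈ Finf) (j : ℤ) : Bfun γ j w ≤ 2 * π * j := by
  rw [Bfun, argm_hfun hγ hw]
  linarith [arg_hfun_nonpos hγ hw]

end Branch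

section FixedPoint

variable {γ R : ℝ} {j : ℤ} {w : ℂ}

lemma hasDerivAt_log_hfun (hγ : 0 < γ) (hw : w ∈ Finf) :
    HasDerivAt (fun w => log (hfun γ w)) (-2 / sqm (w ^ 2 + I * γ)) w := by
  have hζ : HasDerivAt (fun w : ℂ => w ^ 2 + I * γ) (2 * w) w := by
    simpa using (hasDerivAt_pow 2 w).add_const (I * γ)
  have hS := (hasDerivAt_sqm (sq_add_I_mul_mem_slitPlane hγ.ne' hw)).comp w hζ
  have hh := (hS.sub (hasDerivAt_id w)).div (hS.add (hasDerivAt_id w)) (sqm_add_ne_zero hγ.ne' w)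
  refine ((hasDerivAt_log (hfun_mem_slitPlane hγ hw)).comp w hh).congr_deriv ?_
  have hs := sqm_ne_zero (slitPlane_ne_zero (sq_add_I_mul_mem_slitPlane hγ.ne' hw))
  have h₁ := sqm_sub_ne_zero hγ.ne' w
  have h₂ := sqm_add_ne_zero hγ.ne' w
  simp only [hfun, Function.comp_apply, Pi.add_apply, Pi.sub_apply, id]
  field_simp
  ring

lemma Gfun_re (γ : ℝ) (j : ℤ) (R : ℝ) (w : ℂ) : (Gfun γ j R w).re = -Bfun γ j w / (2 * R) := by
  rw [Gfun, show (2 * R : ℂ) = (2 * R : ℝ) by push_cast; ring, div_ofReal_re]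
  simp

lemma Gfun_im (γ : ℝ) (j : ℤ) (R : ℝ) (w : ℂ) : (Gfun γ j R w).im = Afun γ w / (2 * R) := by
  rw [Gfun, show (2 * R : ℂ) = (2 * R : ℝ) by push_cast; ring, div_ofReal_im]
  simp

lemma Gfun_eq_log (hγ : 0 < γ) (hw : w ∈ Finf) (j : ℤ) (R : ℝ) :
    Gfun γ j R w = (I * log (hfun γ w) - 2 * π * j) / (2 * R) := by
  rw [Gfun, Bfun, Afun, argm_hfun hγ hw]
  congr 1
  apply Complex.ext
  · simp [log_im]; ring
  · simp [log_re]

lemma hasDerivWithinAt_Gfun (hγ : 0 < γ) (hw : w ∈ Finf) (j : ℤ) (R : ℝ) :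
    HasDerivWithinAt (Gfun γ j R) (-I / (R * sqm (w ^ 2 + I * γ))) Finf w := by
  refine ((((hasDerivAt_log_hfun hγ hw).const_mul I).sub_const _).div_const _).hasDerivWithinAt
    |>.congr (fun v hv => Gfun_eq_log hγ hv j R) (Gfun_eq_log hγ hw j R) |>.congr_deriv ?_
  ring

lemma norm_deriv_Gfun_le (hγ : 0 < γ) (hR : 0 < R) (hw : w ∈ Finf) :
    ‖-I / (R * sqm (w ^ 2 + I * γ))‖ ≤ 2 / (R * √γ) := by
  have hs := sqrt_div_two_le_norm_sqm hγ hw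
  have hsγ : 0 < √γ := Real.sqrt_pos.2 hγ
  have hs₀ : 0 < ‖sqm (w ^ 2 + I * γ)‖ := by linarith
  rw [norm_div, norm_neg, norm_I, norm_mul, norm_real, Real.norm_of_nonneg hR.le,
    div_le_div_iff₀ (by positivity) (by positivity)]
  nlinarith

lemma lipschitzOnWith_Gfun (hγ : 0 < γ) (hRγ : 4 ≤ R * √γ) (j : ℤ) :
    LipschitzOnWith (1 / 2) (Gfun γ j R) Finf := by
  have hR : 0 < R := by nlinarith [Real.sqrt_pos.2 hγ]
  refine convex_Finf.lipschitzOnWith_of_nnnorm_hasDerivWithin_le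
    (fun v hv => hasDerivWithinAt_Gfun hγ hv j R) fun v hv => ?_
  rw [← NNReal.coe_le_coe, coe_nnnorm]
  calc _ ≤ 2 / (R * √γ) := norm_deriv_Gfun_le hγ hR hv
    _ ≤ _ := by rw [div_le_iff₀ (by positivity)]; push_cast; linarith

lemma Gfun_mem_Finf_iff (hγ : 0 < γ) (hR : 0 < R) (hw : w ∈ Finf) :
    Gfun γ j R w ∈ Finf ↔ 2 * Afun γ w ≤ Bfun γ j w := by
  have hA := Afun_nonneg hγ hw
  have h2R : 0 < 2 * R := by positivity
  simp only [Finf, mem_ofPred_eq, Gfun_re, Gfun_im, neg_div, neg_nonpos, abs_neg, abs_div,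
    abs_of_pos h2R, mul_div_assoc', div_le_div_iff_of_pos_right h2R, div_nonneg_iff, h2R.le,
    h2R.not_ge, hA, and_true, and_false, or_false, true_and]
  constructor
  · rintro ⟨hB, h⟩
    rwa [abs_of_nonneg hB] at h
  · intro h
    have hB : 0 ≤ Bfun γ j w := by linarith
    exact ⟨hB, by rwa [abs_of_nonneg hB]⟩

lemma mapsTo_Gfun (hγ : 0 < γ) (hj : 1 ≤ j) (hRγ : 16 ≤ R * √γ) :
    MapsTo (Gfun γ j R) (Finf ∩ closedBall 0 (2 * π * j / R))
      (Finf ∩ closedBall 0 (2 * π * j / R)) := by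
  have hR : 0 < R := by nlinarith [Real.sqrt_pos.2 hγ]
  have hsγ : 0 < √γ := Real.sqrt_pos.2 hγ
  have hj' : (1 : ℝ) ≤ j := by exact_mod_cast hj
  rintro w ⟨hw, hwρ⟩
  rw [mem_closedBall_zero_iff, le_div_iff₀ hR] at hwρ
  have hA₀ := Afun_nonneg hγ hw
  have hA : Afun γ w ≤ π * j / 2 := (Afun_le hγ w).trans <| by
    rw [div_le_div_iff₀ hsγ two_pos]
    nlinarith [mul_le_mul_of_nonneg_left hRγ (by positivity : (0 : ℝ) ≤ π * j), Real.pi_pos]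
  have hB₁ := sub_pi_le_Bfun γ j w
  have hB₂ := Bfun_le hγ hw j
  refine ⟨(Gfun_mem_Finf_iff hγ hR hw).2 (by nlinarith [Real.pi_pos]), ?_⟩
  rw [mem_closedBall_zero_iff]
  refine (norm_le_abs_re_add_abs_im _).trans ?_
  rw [Gfun_re, Gfun_im, abs_div, abs_div, abs_neg, abs_of_pos (by positivity : 0 < 2 * R),
    abs_of_nonneg hA₀, abs_of_nonneg (by nlinarith [Real.pi_pos]), ← add_div,
    div_le_div_iff₀ (by positivity) hR]
  nlinarith [Real.pi_pos]

lemma existsUnique_eq_Gfun (hγ : 0 < γ) (hj : 1 ≤ j) (hRγ : 16 ≤ R * √γ) :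
    ∃! w, w ∈ Finf ∧ w = Gfun γ j R w := by
  have hR : 0 < R := by nlinarith [Real.sqrt_pos.2 hγ]
  have hlip := lipschitzOnWith_Gfun (R := R) hγ (by linarith) j
  have hmaps := mapsTo_Gfun hγ hj hRγ
  have h₀ : (0 : ℂ) ∈ Finf ∩ closedBall 0 (2 * π * j / R) :=
    ⟨zero_mem_Finf, mem_closedBall_self <| by
      have : (0 : ℝ) < j := by exact_mod_cast hj
      positivity⟩
  obtain ⟨w, hw, hfix, -⟩ := ContractingWith.exists_fixedPoint'
    (isClosed_Finf.inter isClosed_closedBall).isComplete hmaps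
    ⟨by norm_num, (hlip.mono inter_subset_left).mapsToRestrict hmaps⟩ h₀ (edist_ne_top _ _)
  refine ⟨w, ⟨hw.1, hfix.symm⟩, fun v ⟨hv, hvfix⟩ => ?_⟩
  exact hlip.eq_of_isFixedPt (by norm_num) hv hw.1 hvfix.symm hfix

lemma mem_Fj_of_eq_Gfun (hγ : 0 < γ) (hR : 0 < R) (hw : w ∈ Finf) (hfix : w = Gfun γ j R w) :
    w ∈ Fj γ j := by
  refine ⟨hw, ?_⟩
  rw [abs_of_nonneg (Afun_nonneg hγ hw), ← Gfun_mem_Finf_iff hγ hR hw, ← hfix]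
  exact hw

lemma eq_of_Gfun_eq {j' : ℤ} (hR : R ≠ 0) (h : Gfun γ j R w = Gfun γ j' R w) : j = j' := by
  have h' := congrArg re h
  rw [Gfun_re, Gfun_re, div_left_inj' (by simpa using hR), neg_inj, Bfun, Bfun] at h'
  exact_mod_cast mul_left_cancel₀ (by positivity : 2 * π ≠ 0) (add_left_cancel h')

end FixedPoint

/-- For `γ > 0` and `R ≥ 600(γ^{3/4} + γ^{−3/4})`, each equation `w = G_{j,R}(w)`
(`j ≥ 1`) has exactly one solution in `F_∞`; this solution lies in `F_j`, and the
solutions for distinct `j` are distinct. -/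
theorem fixed_point_exists_unique
    (γ R : ℝ) (hγ : 0 < γ)
    (hR : 600 * (γ ^ ((3 : ℝ) / 4) + γ ^ (-(3 : ℝ) / 4)) ≤ R) :
    (∀ j : ℤ, 1 ≤ j → ∃! w : ℂ, w ∈ Finf ∧ w = Gfun γ j R w) ∧
    (∀ j : ℤ, 1 ≤ j → ∀ w : ℂ, w ∈ Finf ∧ w = Gfun γ j R w → w ∈ Fj γ j) ∧
    (∀ j j' : ℤ, 1 ≤ j → 1 ≤ j' → j ≠ j' →
      ∀ w w' : ℂ, (w ∈ Finf ∧ w = Gfun γ j R w) → (w' ∈ Finf ∧ w' = Gfun γ j' R w') →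
        w ≠ w') := by
  have hRγ : 600 ≤ R * √γ := le_mul_sqrt_of_mul_rpow_add_rpow_le hγ (by norm_num) hR
  have hR₀ : 0 < R := by nlinarith [Real.sqrt_pos.2 hγ]
  refine ⟨fun j hj => existsUnique_eq_Gfun hγ hj (by linarith),
    fun j _ w hw => mem_Fj_of_eq_Gfun hγ hR₀ hw.1 hw.2, ?_⟩
  rintro j j' - - hne w w' ⟨-, hw⟩ ⟨-, hw'⟩ rfl
  exact hne (eq_of_Gfun_eq hR₀.ne' (hw.symm.trans hw'))
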